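/- arXiv:2102.07366 — 2 statements merged into one kernel-verified Lean document; each statement's English description precedes it below -/
import Mathlib

section
/- Let f be convex, differentiable, L-smooth with minimizer x⋆. Define Simple-OGM: y_{k+1} = xₖ − (1/L)∇f(xₖ), x_{k+1} = y_{k+1} + (k/(k+3))(y_{k+1} − yₖ) + ((k+2)/(k+3))(y_{k+1} − xₖ), with x₀ = y₀. Then f(yₖ) − f(x⋆) ≤ L‖x₀ − x⋆‖²/(k+1)² for all k ≥ 1. -/
/-!
Write `θₖ = (k + 2)/2`, `zₖ = θₖ xₖ - (θₖ - 1) yₖ` (`ogmAux`) and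
`gap x = f x - f x⋆ - ‖∇f x‖² / (2L)`, an upper bound for `f (x - ∇f x / L) - f x⋆`.
The scheme is equivalent to `z_{k+1} = zₖ - (2θₖ/L) ∇f(xₖ)` together with
`θ_{k+1} x_{k+1} = (θ_{k+1} - 1) y_{k+1} + z_{k+1}`, and the potential
`4θₖ²/L · gap xₖ + ‖z_{k+1} - x⋆‖²` is nonincreasing: the one-step decrease is the sum of the
interpolation inequalities of smooth convex functions between `(xₖ, x_{k+1})`,
`(x⋆, x_{k+1})`, `(xₖ, x⋆)` with weights `4t(t - 1)`, `4t`, `1` where `t = θ_{k+1}`, since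
`(2t - 1)² = 4θₖ²`. Hence `gap xₖ ≤ L‖x₀ - x⋆‖² / (k + 2)²`, which bounds `f(y_{k+1}) - f x⋆`.
-/

open RealInnerProductSpace Set

variable {E : Type*} [NormedAddCommGroup E] [InnerProductSpace ℝ E] [CompleteSpace E]
  {f : E → ℝ} {f' : E → E} {L : ℝ}

theorem IsLocalMin.hasGradientAt_eq_zero {g a : E} (h : IsLocalMin f a) (hf : HasGradientAt f g a) :
    g = 0 :=
  (InnerProductSpace.toDual ℝ E).map_eq_zero_iff.mp (h.hasFDerivAt_eq_zero hf.hasFDerivAt)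

theorem HasGradientAt.hasDerivAt_comp_add_smul {g a d : E} {s : ℝ}
    (h : HasGradientAt f g (a + s • d)) : HasDerivAt (fun t : ℝ => f (a + t • d)) ⟪g, d⟫ s := by
  have hline : HasDerivAt (fun t : ℝ => a + t • d) d s := by
    simpa using ((hasDerivAt_id s).smul_const d).const_add a
  simpa [Function.comp_def] using h.hasFDerivAt.comp_hasDerivAt s hline

theorem ConvexOn.add_inner_le_of_hasGradientAt {g a : E} (hf : ConvexOn ℝ univ f)
    (h : HasGradientAt f g a) (b : E) : f a + ⟪g, b - a⟫ ≤ f b := by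
  have hline : ConvexOn ℝ univ (fun t : ℝ => f (a + t • (b - a))) := by
    simpa [Function.comp_def, AffineMap.lineMap_apply_module', add_comm]
      using hf.comp_affineMap (AffineMap.lineMap a b)
  have hderiv := HasGradientAt.hasDerivAt_comp_add_smul (s := 0) (d := b - a) (by simpa using h)
  simpa [slope_def_field, ← le_sub_iff_add_le'] using
    hline.le_slope_of_hasDerivAt (mem_univ 0) (mem_univ 1) one_pos hderiv

theorem le_add_inner_add_sq_of_lipschitz_gradient (hdiff : ∀ x, HasGradientAt f (f' x) x)
    (hsmooth : ∀ x y, ‖f' x - f' y‖ ≤ L * ‖x - y‖) (a b : E) :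
    f b ≤ f a + ⟪f' a, b - a⟫ + L / 2 * ‖b - a‖ ^ 2 := by
  set d := b - a
  set ψ : ℝ → ℝ := fun s => f (a + s • d) - s * ⟪f' a, d⟫ - L / 2 * s ^ 2 * ‖d‖ ^ 2
  have hψ : ∀ s, HasDerivAt ψ (⟪f' (a + s • d) - f' a, d⟫ - L * s * ‖d‖ ^ 2) s := by
    intro s
    have := ((hdiff (a + s • d)).hasDerivAt_comp_add_smul.sub
      ((hasDerivAt_id s).mul_const ⟪f' a, d⟫)).sub
      (((hasDerivAt_pow 2 s).const_mul (L / 2)).mul_const (‖d‖ ^ 2))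
    exact this.congr_deriv (by rw [inner_sub_left]; ring)
  have hψ_anti : AntitoneOn ψ (Icc 0 1) := by
    refine antitoneOn_of_hasDerivWithinAt_nonpos (convex_Icc 0 1)
      (fun s _ => (hψ s).continuousAt.continuousWithinAt) (fun s _ => (hψ s).hasDerivWithinAt) ?_
    intro s hs
    rw [interior_Icc] at hs
    have hgrad : ‖f' (a + s • d) - f' a‖ ≤ L * (s * ‖d‖) := by
      simpa [norm_smul, abs_of_pos hs.1] using hsmooth (a + s • d) a
    have := real_inner_le_norm (f' (a + s • d) - f' a) d
    nlinarith [norm_nonneg d]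
  have := hψ_anti (left_mem_Icc.mpr zero_le_one) (right_mem_Icc.mpr zero_le_one) zero_le_one
  simp [ψ, d] at this
  linarith

theorem apply_sub_smul_gradient_le (hL : L ≠ 0) (hdiff : ∀ x, HasGradientAt f (f' x) x)
    (hsmooth : ∀ x y, ‖f' x - f' y‖ ≤ L * ‖x - y‖) (a : E) :
    f (a - (1 / L) • f' a) ≤ f a - ‖f' a‖ ^ 2 / (2 * L) := by
  have := le_add_inner_add_sq_of_lipschitz_gradient hdiff hsmooth a (a - (1 / L) • f' a)
  rw [sub_sub_cancel_left, inner_neg_right, norm_neg, inner_smul_right, norm_smul,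
    real_inner_self_eq_norm_sq, Real.norm_eq_abs, mul_pow, sq_abs] at this
  convert this using 1
  field_simp
  ring

theorem ConvexOn.add_inner_add_sq_norm_gradient_sub_le (hL : 0 < L)
    (hdiff : ∀ x, HasGradientAt f (f' x) x) (hconv : ConvexOn ℝ univ f)
    (hsmooth : ∀ x y, ‖f' x - f' y‖ ≤ L * ‖x - y‖) (a b : E) :
    f b + ⟪f' b, a - b⟫ + ‖f' a - f' b‖ ^ 2 / (2 * L) ≤ f a := by
  set w := a - (1 / L) • (f' a - f' b)
  have hdescent := le_add_inner_add_sq_of_lipschitz_gradient hdiff hsmooth a w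
  have hconvex := hconv.add_inner_le_of_hasGradientAt (hdiff b) w
  have hwa : w - a = -((1 / L) • (f' a - f' b)) := by simp [w]
  have hwb : w - b = (a - b) - (1 / L) • (f' a - f' b) := by simp only [w]; abel
  rw [hwa, inner_neg_right, norm_neg, inner_smul_right, norm_smul, Real.norm_eq_abs, mul_pow,
    sq_abs] at hdescent
  rw [hwb, inner_sub_right, inner_smul_right] at hconvex
  have hsq : ⟪f' a, f' a - f' b⟫ - ⟪f' b, f' a - f' b⟫ = ‖f' a - f' b‖ ^ 2 := by
    rw [← inner_sub_left, real_inner_self_eq_norm_sq]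
  have hscale : L / 2 * (1 / L) ^ 2 = 1 / (2 * L) := by field_simp
  rw [← mul_assoc, hscale] at hdescent
  linear_combination hdescent + hconvex - (1 / L) * hsq

theorem ogm_potential_step (hL : 0 < L) (hdiff : ∀ x, HasGradientAt f (f' x) x)
    (hconv : ConvexOn ℝ univ f) (hsmooth : ∀ x y, ‖f' x - f' y‖ ≤ L * ‖x - y‖)
    {xstar : E} (hstar : f' xstar = 0) {t : ℝ} (ht : 1 ≤ t) {x x₁ z : E}
    (hx₁ : t • x₁ = (t - 1) • (x - (1 / L) • f' x) + z) :
    4 * t ^ 2 / L * (f x₁ - f xstar - ‖f' x₁‖ ^ 2 / (2 * L)) + ‖z - (2 * t / L) • f' x₁ - xstar‖ ^ 2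
      ≤ (2 * t - 1) ^ 2 / L * (f x - f xstar - ‖f' x‖ ^ 2 / (2 * L)) + ‖z - xstar‖ ^ 2 := by
  have interp := hconv.add_inner_add_sq_norm_gradient_sub_le hL hdiff hsmooth
  have h_x_x₁ := interp x x₁
  have h_star_x₁ := interp xstar x₁
  have h_x_star := interp x xstar
  rw [hstar, zero_sub, norm_neg] at h_star_x₁
  rw [hstar, inner_zero_left, sub_zero] at h_x_star
  have hinner := congrArg (fun w => ⟪f' x₁, w⟫) hx₁
  simp only [inner_add_right, inner_sub_right, inner_smul_right] at hinner h_x_x₁ h_star_x₁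
  have hnorm : ‖z - (2 * t / L) • f' x₁ - xstar‖ ^ 2
      = ‖z - xstar‖ ^ 2 - 2 * (2 * t / L) * (⟪f' x₁, z⟫ - ⟪f' x₁, xstar⟫)
        + (2 * t / L) ^ 2 * ‖f' x₁‖ ^ 2 := by
    rw [sub_right_comm, norm_sub_sq_real, norm_smul, inner_smul_right, real_inner_comm,
      inner_sub_right, mul_pow, Real.norm_eq_abs, sq_abs]
    ring
  rw [norm_sub_sq_real, real_inner_comm (f' x₁) (f' x)] at h_x_x₁
  rw [hnorm]
  have hc1 : 0 ≤ 4 * t * (t - 1) / L := by have := hL.le; positivity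
  linear_combination mul_le_mul_of_nonneg_left h_x_x₁ hc1 + (4 * t / L) * h_star_x₁
    + (1 / L) * h_x_star + (4 * t / L) * hinner

section SimpleOGM

variable {V : Type*} [AddCommGroup V] [Module ℝ V]

noncomputable def ogmAux (x y : ℕ → V) (k : ℕ) : V :=
  (((k : ℝ) + 2) / 2) • x k - ((k : ℝ) / 2) • y k

theorem ogmAux_zero (x y : ℕ → V) : ogmAux x y 0 = x 0 := by
  simp [ogmAux]

theorem ogmAux_succ {L : ℝ} {g x y : ℕ → V} (hy : ∀ k, y (k + 1) = x k - (1 / L) • g k)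
    (hx : ∀ k : ℕ, x (k + 1) = y (k + 1) + ((k : ℝ) / ((k : ℝ) + 3)) • (y (k + 1) - y k)
      + (((k : ℝ) + 2) / ((k : ℝ) + 3)) • (y (k + 1) - x k)) (k : ℕ) :
    ogmAux x y (k + 1) = ogmAux x y k - (((k : ℝ) + 2) / L) • g k := by
  have hk : (k : ℝ) + 3 ≠ 0 := by positivity
  simp only [ogmAux]
  rw [hx k, hy k]
  push_cast
  match_scalars <;> field_simp <;> ring

end SimpleOGM

theorem ogmAux_potential_le (hL : 0 < L) (hdiff : ∀ x, HasGradientAt f (f' x) x)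
    (hconv : ConvexOn ℝ univ f) (hsmooth : ∀ x y, ‖f' x - f' y‖ ≤ L * ‖x - y‖)
    {xstar : E} (hstar : f' xstar = 0) {x y : ℕ → E}
    (hy : ∀ k, y (k + 1) = x k - (1 / L) • f' (x k))
    (hx : ∀ k : ℕ, x (k + 1) = y (k + 1) + ((k : ℝ) / ((k : ℝ) + 3)) • (y (k + 1) - y k)
      + (((k : ℝ) + 2) / ((k : ℝ) + 3)) • (y (k + 1) - x k)) (k : ℕ) :
    ((k : ℝ) + 2) ^ 2 / L * (f (x k) - f xstar - ‖f' (x k)‖ ^ 2 / (2 * L))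
      + ‖ogmAux x y (k + 1) - xstar‖ ^ 2 ≤ ‖x 0 - xstar‖ ^ 2 := by
  have hz := ogmAux_succ hy hx
  induction k with
  | zero =>
    -- the first step starts from the fictitious iterate `x⋆`, whose gap vanishes
    have := ogm_potential_step hL hdiff hconv hsmooth hstar le_rfl
      (x := xstar) (x₁ := x 0) (z := x 0) (by simp)
    rw [hz, ogmAux_zero]
    convert this using 3 <;> simp [hstar]
    norm_num
  | succ k ih =>
    have step := ogm_potential_step hL hdiff hconv hsmooth hstar (t := ((k : ℝ) + 3) / 2)
      (by linarith [k.cast_nonneg (α := ℝ)]) (x := x k) (x₁ := x (k + 1)) (z := ogmAux x y (k + 1))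
      (by rw [← hy k, ogmAux]; push_cast; match_scalars <;> ring)
    have h4 : 4 * (((k : ℝ) + 3) / 2) ^ 2 = ((↑(k + 1) : ℝ) + 2) ^ 2 := by push_cast; ring
    have h2 : 2 * (((k : ℝ) + 3) / 2) = (↑(k + 1) : ℝ) + 2 := by push_cast; ring
    have h1 : (2 * (((k : ℝ) + 3) / 2) - 1) ^ 2 = ((k : ℝ) + 2) ^ 2 := by ring
    rw [h4, h1, h2, ← hz (k + 1)] at step
    exact step.trans ih

theorem simple_ogm_rate_general (n : ℕ)
    (f : EuclideanSpace ℝ (Fin n) → ℝ)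
    (f' : EuclideanSpace ℝ (Fin n) → EuclideanSpace ℝ (Fin n))
    (L : ℝ) (hL : 0 < L)
    (hdiff : ∀ x, HasGradientAt f (f' x) x)
    (hconv : ConvexOn ℝ Set.univ f)
    (hsmooth : ∀ x y, ‖f' x - f' y‖ ≤ L * ‖x - y‖)
    (xstar : EuclideanSpace ℝ (Fin n)) (hmin : ∀ y, f xstar ≤ f y)
    (x y : ℕ → EuclideanSpace ℝ (Fin n))
    (hy : ∀ k, y (k + 1) = x k - (1 / L) • f' (x k))
    (hx : ∀ k : ℕ, x (k + 1) = y (k + 1) + ((k : ℝ) / ((k : ℝ) + 3)) • (y (k + 1) - y k)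
      + (((k : ℝ) + 2) / ((k : ℝ) + 3)) • (y (k + 1) - x k)) :
    ∀ k : ℕ, 1 ≤ k → f (y k) - f xstar ≤ L * ‖x 0 - xstar‖ ^ 2 / ((k : ℝ) + 1) ^ 2 := by
  intro k hk
  obtain ⟨m, rfl⟩ := Nat.exists_eq_add_of_le' hk
  have hstar : f' xstar = 0 := IsLocalMin.hasGradientAt_eq_zero (.of_forall hmin) (hdiff xstar)
  have hgap := le_of_add_le_of_nonneg_left
    (ogmAux_potential_le hL hdiff hconv hsmooth hstar hy hx m) (sq_nonneg _)
  have hdesc : f (y (m + 1)) ≤ f (x m) - ‖f' (x m)‖ ^ 2 / (2 * L) :=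
    hy m ▸ apply_sub_smul_gradient_le hL.ne' hdiff hsmooth (x m)
  rw [div_mul_eq_mul_div, div_le_iff₀ hL] at hgap
  calc f (y (m + 1)) - f xstar ≤ f (x m) - f xstar - ‖f' (x m)‖ ^ 2 / (2 * L) := by linarith
    _ ≤ L * ‖x 0 - xstar‖ ^ 2 / ((m : ℝ) + 2) ^ 2 := by
      rw [le_div_iff₀ (by positivity)]
      linarith
    _ = L * ‖x 0 - xstar‖ ^ 2 / ((↑(m + 1) : ℝ) + 1) ^ 2 := by push_cast; ring

/-- Convergence rate of Simple-OGM: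
`f(yₖ) − f⋆ ≤ L‖x₀ − x⋆‖² / (k+1)²` for `k ≥ 1`. -/
theorem simple_ogm_rate (n : ℕ)
    (f : EuclideanSpace ℝ (Fin n) → ℝ)
    (f' : EuclideanSpace ℝ (Fin n) → EuclideanSpace ℝ (Fin n))
    (L : ℝ) (hL : 0 < L)
    (hdiff : ∀ x, HasGradientAt f (f' x) x)
    (hconv : ConvexOn ℝ Set.univ f)
    (hsmooth : ∀ x y, ‖f' x - f' y‖ ≤ L * ‖x - y‖)
    (xstar : EuclideanSpace ℝ (Fin n)) (hmin : ∀ y, f xstar ≤ f y)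
    (x y : ℕ → EuclideanSpace ℝ (Fin n))
    (hx0 : x 0 = y 0)
    (hy : ∀ k, y (k + 1) = x k - (1 / L) • f' (x k))
    (hx : ∀ k : ℕ, x (k + 1) = y (k + 1) + ((k : ℝ) / ((k : ℝ) + 3)) • (y (k + 1) - y k)
      + (((k : ℝ) + 2) / ((k : ℝ) + 3)) • (y (k + 1) - x k)) :
    ∀ k : ℕ, 1 ≤ k → f (y k) - f xstar ≤ L * ‖x 0 - xstar‖ ^ 2 / ((k : ℝ) + 1) ^ 2 :=
  simple_ogm_rate_general n f f' L hL hdiff hconv hsmooth xstar hmin x y hy hx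
end

section
/- Let f be convex, differentiable, L-smooth with minimizer x⋆, t ∈ (0,1], and {θₖ} positive with θ₀ = 1 and 0 ≤ θ_{k+1}² − θ_{k+1} ≤ θₖ². For the unified method y_{k+1} = xₖ − (1/L)∇f(xₖ), z_{k+1} = zₖ − (2tθₖ/L)∇f(xₖ), x_{k+1} = (1 − 1/θ_{k+1})y_{k+1} + (1/θ_{k+1})z_{k+1}, x₀ = y₀ = z₀, one has f(yₖ) − f(x⋆) ≤ L‖x₀ − x⋆‖²/(4tθ_{k−1}²) for all k ≥ 1. -/
open RealInnerProductSpace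

/-!
The quantity
`V k = 2tLθₖ²(f(xₖ) − f⋆) − tθₖ²‖∇f(xₖ)‖² + (L²/2)‖z_{k+1} − x⋆‖²`
is a Lyapunov function of the method. `V (k+1) ≤ V k` is the sum of the cocoercivity
inequalities of `f` at the pairs `(x_{k+1}, x⋆)`, `(x_{k+1}, xₖ)` and `(xₖ, x⋆)` with the weights
`tθ_{k+1}`, `t(θ_{k+1}² − θ_{k+1})` and `t(θₖ² − θ_{k+1}² + θ_{k+1})`, the last two being
nonnegative exactly by the step-size condition; `t ≤ 1` disposes of the leftover `‖∇f(x_{k+1})‖²` term. Since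
`V 0 ≤ (L²/2)‖x₀ − x⋆‖²` and the gradient step `y_{k+1}` satisfies
`2tLθₖ²(f(y_{k+1}) − f⋆) ≤ V k`, the rate follows.
-/

section SmoothConvex

variable {E : Type*} [NormedAddCommGroup E] [InnerProductSpace ℝ E] [CompleteSpace E]
  {f : E → ℝ} {f' : E → E} {L : ℝ}

open AffineMap

theorem HasGradientAt.hasDerivAt_comp_lineMap {g v u : E} {s : ℝ}
    (h : HasGradientAt f g (lineMap v u s)) :
    HasDerivAt (fun r : ℝ => f (lineMap v u r)) ⟪g, u - v⟫ s :=
  h.hasFDerivAt.comp_hasDerivAt s hasDerivAt_lineMap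

theorem ConvexOn.add_inner_le_of_hasGradientAt_s18 (hconv : ConvexOn ℝ Set.univ f) {g v : E}
    (hv : HasGradientAt f g v) (u : E) : f v + ⟪g, u - v⟫ ≤ f u := by
  have hderiv : HasDerivAt (fun r : ℝ => f (lineMap v u r)) ⟪g, u - v⟫ 0 :=
    HasGradientAt.hasDerivAt_comp_lineMap (by simpa using hv)
  have := (hconv.comp_affineMap (lineMap v u)).le_slope_of_hasDerivAt
    trivial trivial zero_lt_one hderiv
  simpa [slope_def_field, le_sub_iff_add_le'] using this

theorem le_add_inner_add_of_lipschitz_gradient (hdiff : ∀ x, HasGradientAt f (f' x) x)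
    (hsmooth : ∀ x y, ‖f' x - f' y‖ ≤ L * ‖x - y‖) (u v : E) :
    f u ≤ f v + ⟪f' v, u - v⟫ + L / 2 * ‖u - v‖ ^ 2 := by
  set ψ : ℝ → ℝ := fun s =>
    f (lineMap v u s) - s * ⟪f' v, u - v⟫ - s ^ 2 * (L / 2 * ‖u - v‖ ^ 2)
  have hderiv (s : ℝ) : HasDerivAt ψ
      (⟪f' (lineMap v u s) - f' v, u - v⟫ - s * (L * ‖u - v‖ ^ 2)) s := by
    have := (((hdiff (lineMap v u s)).hasDerivAt_comp_lineMap).sub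
      ((hasDerivAt_id s).mul_const ⟪f' v, u - v⟫)).sub
      ((hasDerivAt_pow 2 s).mul_const (L / 2 * ‖u - v‖ ^ 2))
    refine this.congr_deriv ?_
    rw [inner_sub_left]; norm_num; ring
  have hanti : AntitoneOn ψ (Set.Ici 0) := by
    refine antitoneOn_of_hasDerivWithinAt_nonpos (convex_Ici 0)
      (fun s _ => (hderiv s).continuousAt.continuousWithinAt)
      (fun s _ => (hderiv s).hasDerivWithinAt) fun s hs => ?_
    rw [interior_Ici] at hs
    have hs : 0 < s := hs
    rw [sub_nonpos]
    calc ⟪f' (lineMap v u s) - f' v, u - v⟫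
        ≤ ‖f' (lineMap v u s) - f' v‖ * ‖u - v‖ := real_inner_le_norm _ _
      _ ≤ L * ‖lineMap v u s - v‖ * ‖u - v‖ := by gcongr; exact hsmooth _ _
      _ = s * (L * ‖u - v‖ ^ 2) := by
        rw [lineMap_apply_module', add_sub_cancel_right, norm_smul, Real.norm_of_nonneg hs.le]
        ring
  have := hanti Set.self_mem_Ici (Set.mem_Ici.2 zero_le_one) zero_le_one
  simp only [ψ, lineMap_apply_zero, lineMap_apply_one] at this
  linarith

theorem ConvexOn.sq_norm_gradient_sub_le (hL : 0 < L) (hconv : ConvexOn ℝ Set.univ f)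
    (hdiff : ∀ x, HasGradientAt f (f' x) x) (hsmooth : ∀ x y, ‖f' x - f' y‖ ≤ L * ‖x - y‖)
    (p q : E) : ‖f' q - f' p‖ ^ 2 ≤ 2 * L * (f q - f p - ⟪f' p, q - p⟫) := by
  set Δ := f' q - f' p
  set w := q - L⁻¹ • Δ
  have hlower := hconv.add_inner_le_of_hasGradientAt_s18 (hdiff p) w
  have hupper := le_add_inner_add_of_lipschitz_gradient hdiff hsmooth w q
  have hwp : w - p = (q - p) - L⁻¹ • Δ := by simp only [w]; abel
  have hwq : w - q = -(L⁻¹ • Δ) := by simp only [w]; abel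
  rw [hwp, inner_sub_right, real_inner_smul_right] at hlower
  rw [hwq, inner_neg_right, real_inner_smul_right, norm_neg, norm_smul, Real.norm_eq_abs,
    abs_inv, abs_of_pos hL] at hupper
  have hΔ : ⟪f' q, Δ⟫ - ⟪f' p, Δ⟫ = ‖Δ‖ ^ 2 := by
    rw [← inner_sub_left, real_inner_self_eq_norm_sq]
  have hLinv : L * L⁻¹ = 1 := mul_inv_cancel₀ hL.ne'
  -- `ring` treats `L⁻¹` as an atom; what it cannot cancel is `‖Δ‖ ^ 2 * (L * L⁻¹ - 1) ^ 2`.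
  linear_combination 2 * L * (hlower + hupper) - 2 * L * L⁻¹ * hΔ
    + ‖Δ‖ ^ 2 * (L * L⁻¹ - 1) * hLinv

theorem sq_norm_gradient_le_sub_gradient_step (hL : 0 < L)
    (hdiff : ∀ x, HasGradientAt f (f' x) x) (hsmooth : ∀ x y, ‖f' x - f' y‖ ≤ L * ‖x - y‖) (w : E) :
    ‖f' w‖ ^ 2 ≤ 2 * L * (f w - f (w - (1 / L) • f' w)) := by
  have h := le_add_inner_add_of_lipschitz_gradient hdiff hsmooth (w - (1 / L) • f' w) w
  rw [sub_sub_cancel_left, inner_neg_right, real_inner_smul_right, norm_neg, norm_smul,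
    real_inner_self_eq_norm_sq, Real.norm_of_nonneg (by positivity)] at h
  have hLinv : L * (1 / L) = 1 := mul_one_div_cancel hL.ne'
  linear_combination 2 * L * h + ‖f' w‖ ^ 2 * (L * (1 / L) - 1) * hLinv

theorem sq_norm_gradient_le_of_isMinOn (hL : 0 < L) (hdiff : ∀ x, HasGradientAt f (f' x) x)
    (hsmooth : ∀ x y, ‖f' x - f' y‖ ≤ L * ‖x - y‖) {xstar : E} (hmin : IsMinOn f Set.univ xstar)
    (w : E) : ‖f' w‖ ^ 2 ≤ 2 * L * (f w - f xstar) :=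
  (sq_norm_gradient_le_sub_gradient_step hL hdiff hsmooth w).trans <| by
    gcongr; exact hmin (Set.mem_univ _)

theorem gradient_eq_zero_of_isMinOn (hL : 0 < L) (hdiff : ∀ x, HasGradientAt f (f' x) x)
    (hsmooth : ∀ x y, ‖f' x - f' y‖ ≤ L * ‖x - y‖) {xstar : E} (hmin : IsMinOn f Set.univ xstar) :
    f' xstar = 0 := by
  simpa using sq_norm_gradient_le_of_isMinOn hL hdiff hsmooth hmin xstar

theorem ConvexOn.sq_norm_gradient_le_inner_sub_of_isMinOn (hL : 0 < L)
    (hconv : ConvexOn ℝ Set.univ f) (hdiff : ∀ x, HasGradientAt f (f' x) x)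
    (hsmooth : ∀ x y, ‖f' x - f' y‖ ≤ L * ‖x - y‖) {xstar : E} (hmin : IsMinOn f Set.univ xstar)
    (x : E) : ‖f' x‖ ^ 2 ≤ 2 * L * (⟪f' x, x - xstar⟫ - (f x - f xstar)) := by
  have h := hconv.sq_norm_gradient_sub_le hL hdiff hsmooth x xstar
  rw [gradient_eq_zero_of_isMinOn hL hdiff hsmooth hmin, zero_sub, norm_neg,
    ← neg_sub x xstar, inner_neg_right] at h
  linarith

end SmoothConvex

section UnifiedMethod

variable {E : Type*} [NormedAddCommGroup E] [InnerProductSpace ℝ E]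

structure IsUnifiedIterates (f' : E → E) (L t : ℝ) (θ : ℕ → ℝ) (x y z : ℕ → E) : Prop where
  z_zero : z 0 = x 0
  y_succ (k : ℕ) : y (k + 1) = x k - (1 / L) • f' (x k)
  z_succ (k : ℕ) : z (k + 1) = z k - (2 * t * θ k / L) • f' (x k)
  x_succ (k : ℕ) :
    x (k + 1) = (1 - 1 / θ (k + 1)) • y (k + 1) + (1 / θ (k + 1)) • z (k + 1)

noncomputable def unifiedPotential (f : E → ℝ) (f' : E → E) (L t : ℝ) (θ : ℕ → ℝ)
    (x z : ℕ → E) (xstar : E) (k : ℕ) : ℝ :=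
  2 * t * L * θ k ^ 2 * (f (x k) - f xstar) - t * θ k ^ 2 * ‖f' (x k)‖ ^ 2
    + L ^ 2 / 2 * ‖z (k + 1) - xstar‖ ^ 2

namespace IsUnifiedIterates

variable {f' : E → E} {L t : ℝ} {θ : ℕ → ℝ} {x y z : ℕ → E}

theorem z_sub_eq (hM : IsUnifiedIterates f' L t θ x y z) {k : ℕ} (hθ : θ (k + 1) ≠ 0) (w : E) :
    z (k + 1) - w = θ (k + 1) • (x (k + 1) - w) - (θ (k + 1) - 1) • (y (k + 1) - w) := by
  rw [hM.x_succ k]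
  match_scalars <;> field_simp <;> ring

theorem mul_inner_y_sub (hM : IsUnifiedIterates f' L t θ x y z) (hL : L ≠ 0) (k : ℕ) (v w : E) :
    L * ⟪v, y (k + 1) - w⟫ = L * ⟪v, x k - w⟫ - ⟪v, f' (x k)⟫ := by
  rw [hM.y_succ k, sub_right_comm, inner_sub_right, real_inner_smul_right]
  field_simp

theorem sq_norm_z_succ_sub (hM : IsUnifiedIterates f' L t θ x y z) (hL : L ≠ 0) (k : ℕ) (w : E) :
    L ^ 2 / 2 * ‖z (k + 1) - w‖ ^ 2 = L ^ 2 / 2 * ‖z k - w‖ ^ 2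
      - 2 * t * θ k * L * ⟪f' (x k), z k - w⟫ + 2 * t ^ 2 * θ k ^ 2 * ‖f' (x k)‖ ^ 2 := by
  rw [hM.z_succ k, sub_right_comm, norm_sub_sq_real, norm_smul, real_inner_smul_right,
    real_inner_comm, Real.norm_eq_abs, mul_pow, sq_abs]
  field_simp

variable [CompleteSpace E] {f : E → ℝ} {xstar : E}

theorem unifiedPotential_zero_le (hM : IsUnifiedIterates f' L t θ x y z) (hL : 0 < L)
    (hconv : ConvexOn ℝ Set.univ f) (hdiff : ∀ x, HasGradientAt f (f' x) x)
    (hsmooth : ∀ x y, ‖f' x - f' y‖ ≤ L * ‖x - y‖) (hmin : IsMinOn f Set.univ xstar)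
    (ht0 : 0 ≤ t) (ht1 : t ≤ 1) (hθ0 : θ 0 = 1) :
    unifiedPotential f f' L t θ x z xstar 0 ≤ L ^ 2 / 2 * ‖x 0 - xstar‖ ^ 2 := by
  have hZ := hM.sq_norm_z_succ_sub hL.ne' 0 xstar
  have hI := hconv.sq_norm_gradient_le_inner_sub_of_isMinOn hL hdiff hsmooth hmin (x 0)
  rw [hM.z_zero] at hZ
  have hG : 0 ≤ t * (1 - t) * ‖f' (x 0)‖ ^ 2 := by
    have : 0 ≤ 1 - t := by linarith
    positivity
  rw [unifiedPotential, hZ, hθ0]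
  linarith [mul_le_mul_of_nonneg_left hI ht0]

theorem unifiedPotential_succ_le (hM : IsUnifiedIterates f' L t θ x y z) (hL : 0 < L)
    (hconv : ConvexOn ℝ Set.univ f) (hdiff : ∀ x, HasGradientAt f (f' x) x)
    (hsmooth : ∀ x y, ‖f' x - f' y‖ ≤ L * ‖x - y‖) (hmin : IsMinOn f Set.univ xstar)
    (ht0 : 0 ≤ t) (ht1 : t ≤ 1) {k : ℕ} (hθ : 0 < θ (k + 1))
    (hθrec : 0 ≤ θ (k + 1) ^ 2 - θ (k + 1) ∧ θ (k + 1) ^ 2 - θ (k + 1) ≤ θ k ^ 2) :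
    unifiedPotential f f' L t θ x z xstar (k + 1) ≤ unifiedPotential f f' L t θ x z xstar k := by
  have hD : ⟪f' (x (k + 1)), z (k + 1) - xstar⟫ = θ (k + 1) * ⟪f' (x (k + 1)), x (k + 1) - xstar⟫
      - (θ (k + 1) - 1) * ⟪f' (x (k + 1)), y (k + 1) - xstar⟫ := by
    rw [hM.z_sub_eq hθ.ne' xstar, inner_sub_right, real_inner_smul_right, real_inner_smul_right]
  have hY := hM.mul_inner_y_sub hL.ne' k (f' (x (k + 1))) xstar
  have hZ := hM.sq_norm_z_succ_sub hL.ne' (k + 1) xstar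
  have hI1 := hconv.sq_norm_gradient_le_inner_sub_of_isMinOn hL hdiff hsmooth hmin (x (k + 1))
  have hI2 := hconv.sq_norm_gradient_sub_le hL hdiff hsmooth (x (k + 1)) (x k)
  rw [norm_sub_sq_real, ← sub_sub_sub_cancel_right (x k) (x (k + 1)) xstar, inner_sub_right,
    real_inner_comm (f' (x (k + 1)))] at hI2
  have hI3 := sq_norm_gradient_le_of_isMinOn hL hdiff hsmooth hmin (x k)
  have s1 := mul_le_mul_of_nonneg_left hI1 (mul_nonneg ht0 hθ.le)
  have s2 := mul_le_mul_of_nonneg_left hI2 (mul_nonneg ht0 hθrec.1)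
  have s3 := mul_le_mul_of_nonneg_left hI3 (mul_nonneg ht0 (sub_nonneg.2 hθrec.2))
  have hslack : 0 ≤ t * (1 - t) * θ (k + 1) ^ 2 * ‖f' (x (k + 1))‖ ^ 2 := by
    have : 0 ≤ 1 - t := by linarith
    positivity
  rw [unifiedPotential, unifiedPotential, hZ]
  linear_combination s1 + s2 + s3 + 2 * hslack - 2 * t * θ (k + 1) * L * hD
    + 2 * t * θ (k + 1) * (θ (k + 1) - 1) * hY

theorem unifiedPotential_le (hM : IsUnifiedIterates f' L t θ x y z) (hL : 0 < L)
    (hconv : ConvexOn ℝ Set.univ f) (hdiff : ∀ x, HasGradientAt f (f' x) x)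
    (hsmooth : ∀ x y, ‖f' x - f' y‖ ≤ L * ‖x - y‖) (hmin : IsMinOn f Set.univ xstar)
    (ht0 : 0 ≤ t) (ht1 : t ≤ 1) (hθpos : ∀ k, 0 < θ k) (hθ0 : θ 0 = 1)
    (hθrec : ∀ k, 0 ≤ θ (k + 1) ^ 2 - θ (k + 1) ∧ θ (k + 1) ^ 2 - θ (k + 1) ≤ θ k ^ 2) (k : ℕ) :
    unifiedPotential f f' L t θ x z xstar k ≤ L ^ 2 / 2 * ‖x 0 - xstar‖ ^ 2 := by
  induction k with
  | zero => exact hM.unifiedPotential_zero_le hL hconv hdiff hsmooth hmin ht0 ht1 hθ0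
  | succ k ih =>
    exact (hM.unifiedPotential_succ_le hL hconv hdiff hsmooth hmin ht0 ht1 (hθpos _)
      (hθrec k)).trans ih

theorem mul_sub_le_unifiedPotential (hM : IsUnifiedIterates f' L t θ x y z) (hL : 0 < L)
    (hdiff : ∀ x, HasGradientAt f (f' x) x) (hsmooth : ∀ x y, ‖f' x - f' y‖ ≤ L * ‖x - y‖)
    (ht0 : 0 ≤ t) (k : ℕ) :
    2 * t * L * θ k ^ 2 * (f (y (k + 1)) - f xstar) ≤ unifiedPotential f f' L t θ x z xstar k := by
  have hdesc := sq_norm_gradient_le_sub_gradient_step hL hdiff hsmooth (x k)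
  rw [← hM.y_succ k] at hdesc
  have hZ : 0 ≤ L ^ 2 / 2 * ‖z (k + 1) - xstar‖ ^ 2 := by positivity
  rw [unifiedPotential]
  linarith [mul_le_mul_of_nonneg_left hdesc (mul_nonneg ht0 (sq_nonneg (θ k)))]

end IsUnifiedIterates

end UnifiedMethod

theorem unified_agm_ogm_rate_general (n : ℕ)
    (f : EuclideanSpace ℝ (Fin n) → ℝ)
    (f' : EuclideanSpace ℝ (Fin n) → EuclideanSpace ℝ (Fin n))
    (L : ℝ) (hL : 0 < L)
    (hdiff : ∀ x, HasGradientAt f (f' x) x)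
    (hconv : ConvexOn ℝ Set.univ f)
    (hsmooth : ∀ x y, ‖f' x - f' y‖ ≤ L * ‖x - y‖)
    (xstar : EuclideanSpace ℝ (Fin n)) (hmin : ∀ y, f xstar ≤ f y)
    (t : ℝ) (ht0 : 0 < t) (ht1 : t ≤ 1)
    (θ : ℕ → ℝ) (hθpos : ∀ k, 0 < θ k) (hθ0 : θ 0 = 1)
    (hθrec : ∀ k, 0 ≤ θ (k + 1) ^ 2 - θ (k + 1) ∧ θ (k + 1) ^ 2 - θ (k + 1) ≤ θ k ^ 2)
    (x y z : ℕ → EuclideanSpace ℝ (Fin n))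
    (hz0 : z 0 = x 0)
    (hy : ∀ k, y (k + 1) = x k - (1 / L) • f' (x k))
    (hz : ∀ k, z (k + 1) = z k - (2 * t * θ k / L) • f' (x k))
    (hx : ∀ k, x (k + 1) = (1 - 1 / θ (k + 1)) • y (k + 1) + (1 / θ (k + 1)) • z (k + 1)) :
    ∀ k, 1 ≤ k →
      f (y k) - f xstar ≤ L * ‖x 0 - xstar‖ ^ 2 / (4 * t * θ (k - 1) ^ 2) := by
  have hM : IsUnifiedIterates f' L t θ x y z := ⟨hz0, hy, hz, hx⟩
  intro k hk
  obtain ⟨m, rfl⟩ := Nat.exists_eq_add_of_le' hk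
  have key := (hM.mul_sub_le_unifiedPotential hL hdiff hsmooth ht0.le m).trans
    (hM.unifiedPotential_le hL hconv hdiff hsmooth (fun y _ => hmin y) ht0.le ht1 hθpos hθ0
      hθrec m)
  have hθm := hθpos m
  rw [Nat.add_sub_cancel, le_div_iff₀ (by positivity)]
  refine le_of_mul_le_mul_left ?_ hL
  linear_combination 2 * key

/-- Convergence rate of the unified AGM/OGM family:
`f(yₖ) − f⋆ ≤ L‖x₀ − x⋆‖² / (4tθ_{k−1}²)` for `k ≥ 1`. -/
theorem unified_agm_ogm_rate (n : ℕ)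
    (f : EuclideanSpace ℝ (Fin n) → ℝ)
    (f' : EuclideanSpace ℝ (Fin n) → EuclideanSpace ℝ (Fin n))
    (L : ℝ) (hL : 0 < L)
    (hdiff : ∀ x, HasGradientAt f (f' x) x)
    (hconv : ConvexOn ℝ Set.univ f)
    (hsmooth : ∀ x y, ‖f' x - f' y‖ ≤ L * ‖x - y‖)
    (xstar : EuclideanSpace ℝ (Fin n)) (hmin : ∀ y, f xstar ≤ f y)
    (t : ℝ) (ht0 : 0 < t) (ht1 : t ≤ 1)
    (θ : ℕ → ℝ) (hθpos : ∀ k, 0 < θ k) (hθ0 : θ 0 = 1)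
    (hθrec : ∀ k, 0 ≤ θ (k + 1) ^ 2 - θ (k + 1) ∧ θ (k + 1) ^ 2 - θ (k + 1) ≤ θ k ^ 2)
    (x y z : ℕ → EuclideanSpace ℝ (Fin n))
    (hx0 : x 0 = y 0) (hz0 : z 0 = x 0)
    (hy : ∀ k, y (k + 1) = x k - (1 / L) • f' (x k))
    (hz : ∀ k, z (k + 1) = z k - (2 * t * θ k / L) • f' (x k))
    (hx : ∀ k, x (k + 1) = (1 - 1 / θ (k + 1)) • y (k + 1) + (1 / θ (k + 1)) • z (k + 1)) :
    ∀ k, 1 ≤ k →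
      f (y k) - f xstar ≤ L * ‖x 0 - xstar‖ ^ 2 / (4 * t * θ (k - 1) ^ 2) :=
  unified_agm_ogm_rate_general n f f' L hL hdiff hconv hsmooth xstar hmin t ht0 ht1 θ hθpos hθ0
    hθrec x y z hz0 hy hz hx
end
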